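/- Let x₁, x₂, x₃ be pairwise distinct real numbers, and let f be a real-valued function differentiable at x₁, x₂, x₃, whose values f(x₁), f(x₂), f(x₃) are pairwise distinct and whose derivatives f′(xᵢ) are strictly positive. Let a, b, c, d be real numbers with ad − bc > 0, set φ(t) = (a t + b)/(c t + d), and assume c·f(xᵢ) + d ≠ 0 and φ(f(xᵢ)) = xᵢ for i = 1, 2, 3. Let g = φ ∘ f. Then for all real exponents α₁, α₂, α₃ (with indices taken modulo 3, i.e. x₄ = x₁, x₅ = x₂, α₄ = α₁, α₅ = α₂): g′(x₁)^{α₁} · g′(x₂)^{α₂} · g′(x₃)^{α₃} = ∏_{i=1}^{3} [ f′(xᵢ) · f′(x_{i+1}) · (xᵢ − x_{i+1})² / (f(xᵢ) − f(x_{i+1}))² ]^{(αᵢ + α_{i+1} − α_{i+2})/2}, where all the bases of the real powers are strictly positive. -/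

import Mathlib

/-!
Write `φ(t) = (a t + b)/(c t + d)` and `g = φ ∘ f`, so `g'(x) = f'(x) (ad - bc)/(c f(x) + d)²`.
The Möbius identity `(φ u - φ v)² = φ'(u) φ'(v) (u - v)²`, applied to `u = f(xᵢ)`, `v = f(xⱼ)`
with `φ(f(xᵢ)) = xᵢ`, turns each chord term `f'(xᵢ) f'(xⱼ) (xᵢ - xⱼ)²/(f(xᵢ) - f(xⱼ))²` into
`g'(xᵢ) g'(xⱼ)`. The identity then reduces to the exponent bookkeeping
`u^α₁ v^α₂ w^α₃ = (uv)^((α₁+α₂-α₃)/2) (vw)^((α₂+α₃-α₁)/2) (wu)^((α₃+α₁-α₂)/2)` for `u, v, w > 0`.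
-/

section Mobius

variable {𝕜 : Type*}

theorem mobius_sub_mobius [Field 𝕜] {a b c d u v : 𝕜} (hu : c * u + d ≠ 0) (hv : c * v + d ≠ 0) :
    (a * u + b) / (c * u + d) - (a * v + b) / (c * v + d)
      = (a * d - b * c) * (u - v) / ((c * u + d) * (c * v + d)) := by
  rw [div_sub_div _ _ hu hv]
  ring

theorem mobius_chord_term [Field 𝕜] {a b c d u v x y : 𝕜} (p q : 𝕜)
    (hu : c * u + d ≠ 0) (hv : c * v + d ≠ 0) (huv : u ≠ v)
    (hx : (a * u + b) / (c * u + d) = x) (hy : (a * v + b) / (c * v + d) = y) :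
    p * q * (x - y) ^ 2 / (u - v) ^ 2
      = p * (a * d - b * c) / (c * u + d) ^ 2 * (q * (a * d - b * c) / (c * v + d) ^ 2) := by
  have huv' : u - v ≠ 0 := sub_ne_zero.mpr huv
  rw [← hx, ← hy, mobius_sub_mobius hu hv]
  field_simp

theorem HasDerivAt.mobius_comp [NontriviallyNormedField 𝕜] {f : 𝕜 → 𝕜} {f' x : 𝕜} (a b c d : 𝕜)
    (hf : HasDerivAt f f' x) (hd : c * f x + d ≠ 0) :
    HasDerivAt (fun t => (a * f t + b) / (c * f t + d))
      (f' * (a * d - b * c) / (c * f x + d) ^ 2) x :=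
  (((hf.const_mul a).add_const b).div ((hf.const_mul c).add_const d) hd).congr_deriv
    (by ring)

end Mobius

theorem Real.rpow_mul_rpow_mul_rpow_eq_pairwise {u v w : ℝ} (hu : 0 < u) (hv : 0 < v) (hw : 0 < w)
    (α₁ α₂ α₃ : ℝ) :
    u ^ α₁ * v ^ α₂ * w ^ α₃
      = (u * v) ^ ((α₁ + α₂ - α₃) / 2) * (v * w) ^ ((α₂ + α₃ - α₁) / 2) *
        (w * u) ^ ((α₃ + α₁ - α₂) / 2) := by
  calc u ^ α₁ * v ^ α₂ * w ^ α₃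
      = u ^ ((α₁ + α₂ - α₃) / 2 + (α₃ + α₁ - α₂) / 2) *
          v ^ ((α₁ + α₂ - α₃) / 2 + (α₂ + α₃ - α₁) / 2) *
          w ^ ((α₂ + α₃ - α₁) / 2 + (α₃ + α₁ - α₂) / 2) := by ring_nf
    _ = _ := by
      rw [Real.rpow_add hu, Real.rpow_add hv, Real.rpow_add hw, Real.mul_rpow hu.le hv.le,
        Real.mul_rpow hv.le hw.le, Real.mul_rpow hw.le hu.le]
      ring

theorem stmt_5_general (x₁ x₂ x₃ : ℝ) (f : ℝ → ℝ) (f'₁ f'₂ f'₃ : ℝ) (a b c d : ℝ) (α₁ α₂ α₃ : ℝ)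
    (hdf1 : HasDerivAt f f'₁ x₁) (hdf2 : HasDerivAt f f'₂ x₂) (hdf3 : HasDerivAt f f'₃ x₃)
    (hv12 : f x₁ ≠ f x₂) (hv13 : f x₁ ≠ f x₃) (hv23 : f x₂ ≠ f x₃)
    (hp1 : 0 < f'₁) (hp2 : 0 < f'₂) (hp3 : 0 < f'₃)
    (hdet : 0 < a * d - b * c)
    (hd1 : c * f x₁ + d ≠ 0) (hd2 : c * f x₂ + d ≠ 0) (hd3 : c * f x₃ + d ≠ 0)
    (hφ1 : (a * f x₁ + b) / (c * f x₁ + d) = x₁)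
    (hφ2 : (a * f x₂ + b) / (c * f x₂ + d) = x₂)
    (hφ3 : (a * f x₃ + b) / (c * f x₃ + d) = x₃) :
    (0 < deriv (fun t : ℝ => (a * f t + b) / (c * f t + d)) x₁) ∧
    (0 < deriv (fun t : ℝ => (a * f t + b) / (c * f t + d)) x₂) ∧
    (0 < deriv (fun t : ℝ => (a * f t + b) / (c * f t + d)) x₃) ∧
    (0 < f'₁ * f'₂ * (x₁ - x₂) ^ 2 / (f x₁ - f x₂) ^ 2) ∧
    (0 < f'₂ * f'₃ * (x₂ - x₃) ^ 2 / (f x₂ - f x₃) ^ 2) ∧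
    (0 < f'₃ * f'₁ * (x₃ - x₁) ^ 2 / (f x₃ - f x₁) ^ 2) ∧
    deriv (fun t : ℝ => (a * f t + b) / (c * f t + d)) x₁ ^ α₁ *
        deriv (fun t : ℝ => (a * f t + b) / (c * f t + d)) x₂ ^ α₂ *
        deriv (fun t : ℝ => (a * f t + b) / (c * f t + d)) x₃ ^ α₃
      = (f'₁ * f'₂ * (x₁ - x₂) ^ 2 / (f x₁ - f x₂) ^ 2) ^ ((α₁ + α₂ - α₃) / 2) *
        (f'₂ * f'₃ * (x₂ - x₃) ^ 2 / (f x₂ - f x₃) ^ 2) ^ ((α₂ + α₃ - α₁) / 2) *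
        (f'₃ * f'₁ * (x₃ - x₁) ^ 2 / (f x₃ - f x₁) ^ 2) ^ ((α₃ + α₁ - α₂) / 2) := by
  rw [(hdf1.mobius_comp a b c d hd1).deriv, (hdf2.mobius_comp a b c d hd2).deriv,
    (hdf3.mobius_comp a b c d hd3).deriv,
    mobius_chord_term f'₁ f'₂ hd1 hd2 hv12 hφ1 hφ2,
    mobius_chord_term f'₂ f'₃ hd2 hd3 hv23 hφ2 hφ3,
    mobius_chord_term f'₃ f'₁ hd3 hd1 hv13.symm hφ3 hφ1]
  have hg1 : 0 < f'₁ * (a * d - b * c) / (c * f x₁ + d) ^ 2 := by positivity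
  have hg2 : 0 < f'₂ * (a * d - b * c) / (c * f x₂ + d) ^ 2 := by positivity
  have hg3 : 0 < f'₃ * (a * d - b * c) / (c * f x₃ + d) ^ 2 := by positivity
  exact ⟨hg1, hg2, hg3, mul_pos hg1 hg2, mul_pos hg2 hg3, mul_pos hg3 hg1,
    Real.rpow_mul_rpow_mul_rpow_eq_pairwise hg1 hg2 hg3 α₁ α₂ α₃⟩

/-- Trichordal restriction core identity: if `g = φ ∘ f` where `φ` is a Möbius map with
`ad − bc > 0` fixing the images `f(xᵢ)` back to `xᵢ`, then
`g′(x₁)^{α₁} g′(x₂)^{α₂} g′(x₃)^{α₃}` equals the explicit product of the three cross terms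
raised to the powers `(αᵢ + α_{i+1} − α_{i+2})/2`; all bases of the real powers are positive. -/
theorem stmt_5 (x₁ x₂ x₃ : ℝ) (f : ℝ → ℝ) (f'₁ f'₂ f'₃ : ℝ) (a b c d : ℝ) (α₁ α₂ α₃ : ℝ)
    (hx12 : x₁ ≠ x₂) (hx13 : x₁ ≠ x₃) (hx23 : x₂ ≠ x₃)
    (hdf1 : HasDerivAt f f'₁ x₁) (hdf2 : HasDerivAt f f'₂ x₂) (hdf3 : HasDerivAt f f'₃ x₃)
    (hv12 : f x₁ ≠ f x₂) (hv13 : f x₁ ≠ f x₃) (hv23 : f x₂ ≠ f x₃)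
    (hp1 : 0 < f'₁) (hp2 : 0 < f'₂) (hp3 : 0 < f'₃)
    (hdet : 0 < a * d - b * c)
    (hd1 : c * f x₁ + d ≠ 0) (hd2 : c * f x₂ + d ≠ 0) (hd3 : c * f x₃ + d ≠ 0)
    (hφ1 : (a * f x₁ + b) / (c * f x₁ + d) = x₁)
    (hφ2 : (a * f x₂ + b) / (c * f x₂ + d) = x₂)
    (hφ3 : (a * f x₃ + b) / (c * f x₃ + d) = x₃) :
    (0 < deriv (fun t : ℝ => (a * f t + b) / (c * f t + d)) x₁) ∧
    (0 < deriv (fun t : ℝ => (a * f t + b) / (c * f t + d)) x₂) ∧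
    (0 < deriv (fun t : ℝ => (a * f t + b) / (c * f t + d)) x₃) ∧
    (0 < f'₁ * f'₂ * (x₁ - x₂) ^ 2 / (f x₁ - f x₂) ^ 2) ∧
    (0 < f'₂ * f'₃ * (x₂ - x₃) ^ 2 / (f x₂ - f x₃) ^ 2) ∧
    (0 < f'₃ * f'₁ * (x₃ - x₁) ^ 2 / (f x₃ - f x₁) ^ 2) ∧
    deriv (fun t : ℝ => (a * f t + b) / (c * f t + d)) x₁ ^ α₁ *
        deriv (fun t : ℝ => (a * f t + b) / (c * f t + d)) x₂ ^ α₂ *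
        deriv (fun t : ℝ => (a * f t + b) / (c * f t + d)) x₃ ^ α₃
      = (f'₁ * f'₂ * (x₁ - x₂) ^ 2 / (f x₁ - f x₂) ^ 2) ^ ((α₁ + α₂ - α₃) / 2) *
        (f'₂ * f'₃ * (x₂ - x₃) ^ 2 / (f x₂ - f x₃) ^ 2) ^ ((α₂ + α₃ - α₁) / 2) *
        (f'₃ * f'₁ * (x₃ - x₁) ^ 2 / (f x₃ - f x₁) ^ 2) ^ ((α₃ + α₁ - α₂) / 2) :=
  stmt_5_general x₁ x₂ x₃ f f'₁ f'₂ f'₃ a b c d α₁ α₂ α₃ hdf1 hdf2 hdf3 hv12 hv13 hv23 hp1 hp2 hp3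
    hdet hd1 hd2 hd3 hφ1 hφ2 hφ3
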